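/- The informational power of the 2-dimensional octahedral (complete MUB) POVM (π_y)_{y=1}^6 equals (1/6) ln 4 = (1/3) ln 2: the supremum over all ensembles (ρ_x) of the mutual information I(ρ; π) equals (1/3) ln 2, and it is attained by the anti-octahedral ensemble ρ_x = (1/12)(I − u_x·σ), x = 1,…,6, which satisfies ρ_x π_x = 0 for every x. -/

import Mathlib

open MeasureTheory Matrix Finset Filter
open scoped ComplexOrder

noncomputable section

/-- The `k`-fold Kronecker tensor power of a `d × d` matrix, acting on `(ℂ^d)^{⊗k}`
(indexed by functions `Fin k → Fin d`). -/
def matTensorPow {d : ℕ} (M : Matrix (Fin d) (Fin d) ℂ) (k : ℕ) :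
    Matrix (Fin k → Fin d) (Fin k → Fin d) ℂ :=
  Matrix.of fun f g => ∏ i, M (f i) (g i)

/-- The orthogonal projection onto the symmetric subspace of `(ℂ^d)^{⊗k}`,
written as the average of the permutation operators. -/
def symProj (k d : ℕ) : Matrix (Fin k → Fin d) (Fin k → Fin d) ℂ :=
  ((Nat.factorial k : ℂ))⁻¹ •
    ∑ σ : Equiv.Perm (Fin k),
      Matrix.of fun f g => if (∀ i, f (σ i) = g i) then (1 : ℂ) else 0

/-- A (finite) POVM on `ℂ^d`: positive semidefinite effects summing to the identity. -/
def IsPOVM {d m : ℕ} (π : Fin m → Matrix (Fin d) (Fin d) ℂ) : Prop :=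
  (∀ y, (π y).PosSemidef) ∧ ∑ y, π y = 1

/-- A spherical quantum `t`-design POVM on `ℂ^d`. -/
def IsTDesignPOVM {d m : ℕ} (t : ℕ) (π : Fin m → Matrix (Fin d) (Fin d) ℂ) : Prop :=
  IsPOVM π ∧ (∀ y, π y ≠ 0) ∧
    ∀ k, 1 ≤ k → k ≤ t →
      ((d : ℂ))⁻¹ • ∑ y, (((π y).trace) ^ (k - 1))⁻¹ • matTensorPow (π y) k
        = ((Nat.choose (d - 1 + k) k : ℂ))⁻¹ • symProj k d

/-- A (finite) ensemble on `ℂ^d`: positive semidefinite matrices with unit total trace. -/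
def IsEnsemble {d n : ℕ} (ρ : Fin n → Matrix (Fin d) (Fin d) ℂ) : Prop :=
  (∀ x, (ρ x).PosSemidef) ∧ ∑ x, (ρ x).trace = 1

/-- The mutual information (in nats) of the joint distribution
`p_{x,y} = Tr(ρ_x π_y)`; terms with `p_{x,y} = 0` vanish. -/
def mutualInfo {d n m : ℕ} (ρ : Fin n → Matrix (Fin d) (Fin d) ℂ)
    (π : Fin m → Matrix (Fin d) (Fin d) ℂ) : ℝ :=
  ∑ x, ∑ y,
    ((ρ x * π y).trace).re *
      Real.log (((ρ x * π y).trace).re /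
        (((ρ x).trace).re * ∑ x', ((ρ x' * π y).trace).re))

/-- The informational power of a POVM: the supremum of the mutual information
over all (finite) ensembles. -/
def infoPower {d m : ℕ} (π : Fin m → Matrix (Fin d) (Fin d) ℂ) : ℝ :=
  sSup {w | ∃ (n : ℕ) (ρ : Fin n → Matrix (Fin d) (Fin d) ℂ),
    IsEnsemble ρ ∧ w = mutualInfo ρ π}

/-- The accessible information of an ensemble: the supremum of the mutual
information over all (finite) POVMs. -/
def accInfo {d n : ℕ} (ρ : Fin n → Matrix (Fin d) (Fin d) ℂ) : ℝ :=
  sSup {w | ∃ (m : ℕ) (π : Fin m → Matrix (Fin d) (Fin d) ℂ),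
    IsPOVM π ∧ w = mutualInfo ρ π}

/-- `η(u) = -u ln u` (with `η(0) = 0`). -/
def etaFn (u : ℝ) : ℝ := -u * Real.log u
/-- The Pauli matrices. -/
def pauliX : Matrix (Fin 2) (Fin 2) ℂ := !![0, 1; 1, 0]
def pauliY : Matrix (Fin 2) (Fin 2) ℂ := !![0, -Complex.I; Complex.I, 0]
def pauliZ : Matrix (Fin 2) (Fin 2) ℂ := !![1, 0; 0, -1]

/-- `s·σ = s₁σ₁ + s₂σ₂ + s₃σ₃` for `s ∈ ℝ³`. -/
def dotPauli (s : Fin 3 → ℝ) : Matrix (Fin 2) (Fin 2) ℂ :=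
  (s 0 : ℂ) • pauliX + (s 1 : ℂ) • pauliY + (s 2 : ℂ) • pauliZ
/-- Bloch vectors of the octahedral (complete MUB) POVM: `±e₁, ±e₂, ±e₃`. -/
def octaVec : Fin 6 → Fin 3 → ℝ :=
  ![![1, 0, 0], ![-1, 0, 0], ![0, 1, 0], ![0, -1, 0], ![0, 0, 1], ![0, 0, -1]]

/-- The 2-dimensional octahedral (complete MUB) POVM `π_y = (1/6)(I + u_y·σ)`. -/
def octaPOVM : Fin 6 → Matrix (Fin 2) (Fin 2) ℂ :=
  fun y => (1 / 6 : ℂ) • (1 + dotPauli (octaVec y))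
/-- The anti-octahedral ensemble `ρ_x = (1/12)(I − u_x·σ)`. -/
def antiOcta : Fin 6 → Matrix (Fin 2) (Fin 2) ℂ :=
  fun x => (1 / 12 : ℂ) • (1 - dotPauli (octaVec x))

/-!
Write a qubit state as `ρ = (p • 1 + n · σ) / 2` with `p = Tr ρ` and Bloch vector `n`;
positivity of `ρ` is `‖n‖ ≤ p`, and the octahedral outcome probabilities are `(p ± nᵢ) / 6`.
Replacing the output marginal by the uniform distribution can only increase the mutual
information (Gibbs' inequality). With `σ = nᵢ / p`, what is left is a sum of terms `p f(σ) / 6`,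
where `f(σ) = (1 + σ) ln (1 + σ) + (1 - σ) ln (1 - σ)`. Since `f(σ) / σ²` is a power series in
`σ²` with positive coefficients, `f(σ) ≤ f(1) σ² = 2 ln 2 · σ²`, and `∑ᵢ nᵢ² ≤ p²` gives
`I ≤ (ln 2 / 3) ∑ₓ pₓ = ln 2 / 3`. The anti-octahedral ensemble, whose states are annihilated
by the matching effects, attains this bound.
-/

open Real Topology

def symmMulLog (σ : ℝ) : ℝ := (1 + σ) * log (1 + σ) + (1 - σ) * log (1 - σ)

theorem hasSum_symmMulLog {σ : ℝ} (hσ : |σ| < 1) :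
    HasSum (fun k : ℕ => (σ ^ 2) ^ (k + 1) / ((2 * k + 1) * (k + 1))) (symmMulLog σ) := by
  have hσ2 : |σ ^ 2| < 1 := by
    rw [abs_of_nonneg (sq_nonneg σ), ← sq_abs]
    exact pow_lt_one₀ (abs_nonneg σ) hσ two_ne_zero
  have hlog : log (1 - σ ^ 2) = log (1 + σ) + log (1 - σ) := by
    rw [← log_mul (by linarith [neg_abs_le σ]) (by linarith [le_abs_self σ])]
    ring_nf
  have key := ((hasSum_log_sub_log_of_abs_lt_one hσ).mul_left σ).sub
    (hasSum_pow_div_log_of_abs_lt_one hσ2)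
  rw [show σ * (log (1 + σ) - log (1 - σ)) - -log (1 - σ ^ 2) = symmMulLog σ by
    rw [symmMulLog, hlog]; ring] at key
  refine key.congr_fun fun k => ?_
  field_simp
  ring

theorem symmMulLog_mul_sq_le {σ τ : ℝ} (hστ : σ ^ 2 ≤ τ ^ 2) (hτ : |τ| < 1) :
    symmMulLog σ * τ ^ 2 ≤ symmMulLog τ * σ ^ 2 := by
  have hσ : |σ| < 1 := (sq_le_sq.1 hστ).trans_lt hτ
  refine hasSum_le (fun k => ?_) ((hasSum_symmMulLog hσ).mul_right _)
    ((hasSum_symmMulLog hτ).mul_right _)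
  rw [div_mul_eq_mul_div, div_mul_eq_mul_div]
  refine div_le_div_of_nonneg_right ?_ (by positivity)
  calc (σ ^ 2) ^ (k + 1) * τ ^ 2 = (σ ^ 2) ^ k * (σ ^ 2 * τ ^ 2) := by ring
    _ ≤ (τ ^ 2) ^ k * (σ ^ 2 * τ ^ 2) := by gcongr
    _ = (τ ^ 2) ^ (k + 1) * σ ^ 2 := by ring

theorem symmMulLog_neg (σ : ℝ) : symmMulLog (-σ) = symmMulLog σ := by
  rw [symmMulLog, symmMulLog, sub_neg_eq_add, ← sub_eq_add_neg, add_comm]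

theorem symmMulLog_one : symmMulLog 1 = 2 * log 2 := by
  norm_num [symmMulLog]

theorem continuous_symmMulLog : Continuous symmMulLog :=
  (continuous_mul_log.comp (by fun_prop)).add (continuous_mul_log.comp (by fun_prop))

theorem symmMulLog_le {σ : ℝ} (hσ : σ ^ 2 ≤ 1) : symmMulLog σ ≤ 2 * log 2 * σ ^ 2 := by
  rcases hσ.eq_or_lt with hσ1 | hσ1
  · rcases sq_eq_one_iff.1 hσ1 with rfl | rfl
    all_goals simp [symmMulLog_neg, symmMulLog_one]
  have hσ' : |σ| < 1 := by rwa [sq_lt_one_iff_abs_lt_one] at hσ1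
  -- The series stops short of `τ = 1`, so `symmMulLog_mul_sq_le` is pushed there as a limit.
  have hlim : Tendsto (fun τ => symmMulLog σ * τ ^ 2 - symmMulLog τ * σ ^ 2) (𝓝[<] 1)
      (𝓝 (symmMulLog σ - 2 * log 2 * σ ^ 2)) := by
    have hcont : Continuous fun τ => symmMulLog σ * τ ^ 2 - symmMulLog τ * σ ^ 2 := by
      have := continuous_symmMulLog
      fun_prop
    simpa only [one_pow, mul_one, symmMulLog_one] using
      (hcont.tendsto 1).mono_left nhdsWithin_le_nhds
  refine sub_nonpos.1 (le_of_tendsto hlim ?_)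
  filter_upwards [Ioo_mem_nhdsLT hσ'] with τ hτ
  have hτ0 : 0 ≤ τ := (abs_nonneg σ).trans hτ.1.le
  refine sub_nonpos.2 (symmMulLog_mul_sq_le ?_ ?_)
  · exact sq_le_sq.2 (by rw [abs_of_nonneg hτ0]; exact hτ.1.le)
  · rw [abs_of_nonneg hτ0]; exact hτ.2

theorem mul_symmMulLog_div {p : ℝ} (hp : p ≠ 0) (s : ℝ) :
    p * symmMulLog (s / p) = (p + s) * log ((p + s) / p) + (p - s) * log ((p - s) / p) := by
  rw [symmMulLog, one_add_div hp, one_sub_div hp]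
  field_simp

theorem sum_add_mul_log_add_sub_mul_log_sub_le {ι : Type*} [Fintype ι] {p : ℝ} {n : ι → ℝ}
    (hp : 0 ≤ p) (hn : ∑ i, n i ^ 2 ≤ p ^ 2) :
    ∑ i, ((p + n i) * log ((p + n i) / p) + (p - n i) * log ((p - n i) / p))
      ≤ 2 * log 2 * p := by
  rcases hp.eq_or_lt with rfl | hp
  · simp
  have hterm (i : ι) : (p + n i) * log ((p + n i) / p) + (p - n i) * log ((p - n i) / p)
      ≤ 2 * log 2 / p * n i ^ 2 := by
    have hni : n i ^ 2 ≤ p ^ 2 :=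
      (Finset.single_le_sum (fun j _ => sq_nonneg (n j)) (Finset.mem_univ i)).trans hn
    rw [← mul_symmMulLog_div hp.ne']
    calc p * symmMulLog (n i / p) ≤ p * (2 * log 2 * (n i / p) ^ 2) := by
          gcongr
          exact symmMulLog_le (by rw [div_pow, div_le_one (by positivity)]; exact hni)
      _ = 2 * log 2 / p * n i ^ 2 := by field_simp
  calc _ ≤ ∑ i, 2 * log 2 / p * n i ^ 2 := Finset.sum_le_sum fun i _ => hterm i
    _ = 2 * log 2 / p * ∑ i, n i ^ 2 := by rw [Finset.mul_sum]
    _ ≤ 2 * log 2 / p * p ^ 2 := by gcongr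
    _ = 2 * log 2 * p := by field_simp

section JointDistribution

variable {ι κ : Type*} [Fintype ι] [Fintype κ]

def jointMutualInfo (P : ι → κ → ℝ) : ℝ :=
  ∑ x, ∑ y, P x y * log (P x y / ((∑ y', P x y') * ∑ x', P x' y))

theorem mul_log_div_le_sub {q r : ℝ} (hq : 0 ≤ q) (hr : 0 < r) : q * log (r / q) ≤ r - q := by
  rcases hq.eq_or_lt with rfl | hq
  · simpa using hr.le
  calc q * log (r / q) ≤ q * (r / q - 1) := by gcongr; exact log_le_sub_one_of_pos (by positivity)
    _ = r - q := by field_simp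

theorem jointMutualInfo_le (P : ι → κ → ℝ) (r : κ → ℝ) (hP : ∀ x y, 0 ≤ P x y)
    (hr : ∀ y, 0 < r y) (hsum : ∑ y, r y = ∑ x, ∑ y, P x y) :
    jointMutualInfo P ≤ ∑ x, ∑ y, P x y * log (P x y / ((∑ y', P x y') * r y)) := by
  set p : ι → ℝ := fun x => ∑ y, P x y
  set q : κ → ℝ := fun y => ∑ x, P x y
  have hsplit (x : ι) (y : κ) : P x y * log (P x y / (p x * q y))
      = P x y * log (P x y / (p x * r y)) + P x y * log (r y / q y) := by
    rcases (hP x y).eq_or_lt with h0 | h0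
    · simp [← h0]
    have hpx : 0 < p x :=
      h0.trans_le (Finset.single_le_sum (fun y _ => hP x y) (Finset.mem_univ y))
    have hqy : 0 < q y :=
      h0.trans_le (Finset.single_le_sum (fun x _ => hP x y) (Finset.mem_univ x))
    have hry := hr y
    rw [← mul_add, ← log_mul (div_pos h0 (mul_pos hpx hry)).ne' (div_pos hry hqy).ne']
    congr 2
    field_simp
  have hgibbs : ∑ x, ∑ y, P x y * log (r y / q y) ≤ 0 := by
    calc ∑ x, ∑ y, P x y * log (r y / q y) = ∑ y, q y * log (r y / q y) := by
          rw [Finset.sum_comm]; simp only [q, Finset.sum_mul]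
      _ ≤ ∑ y, (r y - q y) := Finset.sum_le_sum fun y _ =>
        mul_log_div_le_sub (Finset.sum_nonneg fun x _ => hP x y) (hr y)
      _ = 0 := by rw [Finset.sum_sub_distrib, hsum, Finset.sum_comm, sub_self]
  calc jointMutualInfo P = (∑ x, ∑ y, P x y * log (P x y / (p x * r y)))
        + ∑ x, ∑ y, P x y * log (r y / q y) := by
        simp only [← Finset.sum_add_distrib]
        exact Finset.sum_congr rfl fun x _ => Finset.sum_congr rfl fun y _ => hsplit x y
    _ ≤ _ := add_le_of_le_of_nonpos le_rfl hgibbs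

end JointDistribution

theorem sum_re_trace_mul_of_sum_eq_one {d m : ℕ} (A : Matrix (Fin d) (Fin d) ℂ)
    {E : Fin m → Matrix (Fin d) (Fin d) ℂ} (hE : ∑ y, E y = 1) :
    ∑ y, ((A * E y).trace).re = (A.trace).re := by
  rw [← Complex.re_sum, ← Matrix.trace_sum, ← Matrix.mul_sum, hE, Matrix.mul_one]

theorem mutualInfo_eq_jointMutualInfo {d n m : ℕ} (ρ : Fin n → Matrix (Fin d) (Fin d) ℂ)
    {E : Fin m → Matrix (Fin d) (Fin d) ℂ} (hE : ∑ y, E y = 1) :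
    mutualInfo ρ E = jointMutualInfo fun x y => ((ρ x * E y).trace).re := by
  simp only [mutualInfo, jointMutualInfo, sum_re_trace_mul_of_sum_eq_one _ hE]

def blochVec (ρ : Matrix (Fin 2) (Fin 2) ℂ) : Fin 3 → ℝ :=
  ![((ρ * pauliX).trace).re, ((ρ * pauliY).trace).re, ((ρ * pauliZ).trace).re]

theorem re_trace_mul_dotPauli (ρ : Matrix (Fin 2) (Fin 2) ℂ) (s : Fin 3 → ℝ) :
    ((ρ * dotPauli s).trace).re = ∑ i, s i * blochVec ρ i := by
  simp [dotPauli, blochVec, Matrix.mul_add, Matrix.trace_add, Fin.sum_univ_three,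
    Matrix.trace_smul]

theorem Matrix.PosSemidef.sum_blochVec_sq_le {ρ : Matrix (Fin 2) (Fin 2) ℂ}
    (hρ : ρ.PosSemidef) : ∑ i, blochVec ρ i ^ 2 ≤ ((ρ.trace).re) ^ 2 := by
  have h10 : ρ 1 0 = star (ρ 0 1) := (hρ.1.apply 1 0).symm
  have him (i : Fin 2) : (ρ i i).im = 0 := by
    have := congrArg Complex.im (hρ.1.apply i i)
    simp only [Complex.star_def, Complex.conj_im] at this
    linarith
  have hsq : ∑ i, blochVec ρ i ^ 2
      = 4 * Complex.normSq (ρ 0 1) + ((ρ 0 0).re - (ρ 1 1).re) ^ 2 := by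
    simp only [blochVec, pauliX, pauliY, pauliZ, trace_fin_two, mul_apply, of_apply, cons_val',
      cons_val_zero, cons_val_one, cons_val, cons_val_fin_one, Fin.sum_univ_two, Fin.sum_univ_three,
      Fin.isValue, mul_zero, mul_one, zero_add, add_zero, h10, RCLike.star_def, Complex.add_re,
      Complex.conj_re, mul_neg, Complex.mul_re, Complex.I_re, Complex.I_im, zero_sub,
      Complex.neg_re, Complex.conj_im, sub_neg_eq_add, Complex.normSq_apply]
    ring
  have hdet : Complex.normSq (ρ 0 1) ≤ (ρ 0 0).re * (ρ 1 1).re := by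
    have := (Complex.nonneg_iff.1 hρ.det_nonneg).1
    simpa [Matrix.det_fin_two, h10, Complex.mul_re, him, Complex.normSq_apply] using this
  rw [hsq, Matrix.trace_fin_two, Complex.add_re]
  nlinarith

theorem isHermitian_dotPauli (s : Fin 3 → ℝ) : (dotPauli s).IsHermitian := by
  ext i j
  fin_cases i <;> fin_cases j <;>
    simp [dotPauli, pauliX, pauliY, pauliZ]

theorem dotPauli_mul_self (s : Fin 3 → ℝ) :
    dotPauli s * dotPauli s = ((∑ i, s i ^ 2 : ℝ) : ℂ) • 1 := by
  ext i j
  fin_cases i <;> fin_cases j <;>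
    simp [dotPauli, pauliX, pauliY, pauliZ, Matrix.mul_apply, Fin.sum_univ_two,
      Fin.sum_univ_three] <;> ring_nf <;> simp [Complex.I_sq]

theorem trace_dotPauli (s : Fin 3 → ℝ) : (dotPauli s).trace = 0 := by
  simp [dotPauli, pauliX, pauliY, pauliZ, Matrix.trace_fin_two]

theorem Matrix.IsHermitian.posSemidef_one_sub {𝕜 n : Type*} [RCLike 𝕜] [Fintype n]
    [DecidableEq n] {D : Matrix n n 𝕜} (hD : D.IsHermitian) (hD2 : D * D = 1) :
    (1 - D).PosSemidef := by
  have h : 1 - D = (2⁻¹ : 𝕜) • ((1 - D)ᴴ * (1 - D)) := by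
    simp only [Matrix.conjTranspose_sub, Matrix.conjTranspose_one, hD.eq, sub_mul, mul_sub,
      hD2, one_mul, mul_one]
    module
  rw [h]
  exact (Matrix.posSemidef_conjTranspose_mul_self _).smul (by positivity)

theorem sum_octaPOVM : ∑ y, octaPOVM y = 1 := by
  ext i j
  fin_cases i <;> fin_cases j <;>
    simp [Fin.sum_univ_six, octaPOVM, octaVec, dotPauli, pauliX, pauliY, pauliZ] <;> norm_num

theorem sum_octaVec_sq (y : Fin 6) : ∑ i, octaVec y i ^ 2 = 1 := by
  fin_cases y <;> simp [octaVec, Fin.sum_univ_three]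

theorem sum_octaVec_dot (g : ℝ → ℝ) (n : Fin 3 → ℝ) :
    ∑ y, g (∑ i, octaVec y i * n i) = ∑ i, (g (n i) + g (-n i)) := by
  simp only [octaVec, cons_val', cons_val_fin_one, Fin.sum_univ_three, Fin.isValue, cons_val_zero,
    cons_val_one, Matrix.cons_val, Fin.sum_univ_six, one_mul, zero_mul, add_zero, neg_mul, zero_add]
  ring

theorem dotPauli_octaVec_mul_self (x : Fin 6) :
    dotPauli (octaVec x) * dotPauli (octaVec x) = 1 := by
  rw [dotPauli_mul_self, sum_octaVec_sq, Complex.ofReal_one, one_smul]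

theorem re_trace_mul_octaPOVM (ρ : Matrix (Fin 2) (Fin 2) ℂ) (y : Fin 6) :
    ((ρ * octaPOVM y).trace).re = ((ρ.trace).re + ∑ i, octaVec y i * blochVec ρ i) / 6 := by
  rw [octaPOVM, Matrix.mul_smul, Matrix.trace_smul, Matrix.mul_add, Matrix.mul_one,
    Matrix.trace_add, smul_eq_mul, one_div_mul_eq_div, Complex.div_ofNat_re, Complex.add_re,
    re_trace_mul_dotPauli]

theorem Matrix.PosSemidef.re_trace_mul_octaPOVM_nonneg {ρ : Matrix (Fin 2) (Fin 2) ℂ}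
    (hρ : ρ.PosSemidef) (y : Fin 6) : 0 ≤ ((ρ * octaPOVM y).trace).re := by
  have hcs := Finset.sum_mul_sq_le_sq_mul_sq Finset.univ (octaVec y) (blochVec ρ)
  rw [sum_octaVec_sq, one_mul] at hcs
  have htr : 0 ≤ (ρ.trace).re := (Complex.nonneg_iff.1 hρ.trace_nonneg).1
  rw [re_trace_mul_octaPOVM]
  have := (abs_le_of_sq_le_sq' (hcs.trans hρ.sum_blochVec_sq_le) htr).1
  linarith

theorem Matrix.PosSemidef.sum_re_trace_mul_octaPOVM_mul_log_le {ρ : Matrix (Fin 2) (Fin 2) ℂ}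
    (hρ : ρ.PosSemidef) :
    ∑ y, ((ρ * octaPOVM y).trace).re
        * log (((ρ * octaPOVM y).trace).re / ((ρ.trace).re * 6⁻¹))
      ≤ log 2 / 3 * (ρ.trace).re := by
  set p := (ρ.trace).re
  have hp : 0 ≤ p := (Complex.nonneg_iff.1 hρ.trace_nonneg).1
  simp_rw [re_trace_mul_octaPOVM]
  rw [sum_octaVec_dot (fun t => (p + t) / 6 * log ((p + t) / 6 / (p * 6⁻¹))) (blochVec ρ)]
  calc _ = 6⁻¹ * ∑ i, ((p + blochVec ρ i) * log ((p + blochVec ρ i) / p)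
        + (p - blochVec ρ i) * log ((p - blochVec ρ i) / p)) := by
        have hdiv (a : ℝ) : a / 6 / (p * 6⁻¹) = a / p := by ring
        rw [Finset.mul_sum]
        refine Finset.sum_congr rfl fun i _ => ?_
        rw [hdiv, hdiv, ← sub_eq_add_neg]
        ring
    _ ≤ 6⁻¹ * (2 * log 2 * p) := by
        gcongr
        exact sum_add_mul_log_add_sub_mul_log_sub_le hp hρ.sum_blochVec_sq_le
    _ = log 2 / 3 * p := by ring

theorem mutualInfo_octaPOVM_le {n : ℕ} {ρ : Fin n → Matrix (Fin 2) (Fin 2) ℂ}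
    (hρ : IsEnsemble ρ) : mutualInfo ρ octaPOVM ≤ log 2 / 3 := by
  have hsum : ∑ x, ((ρ x).trace).re = 1 := by rw [← Complex.re_sum, hρ.2, Complex.one_re]
  rw [mutualInfo_eq_jointMutualInfo ρ sum_octaPOVM]
  refine (jointMutualInfo_le _ (fun _ => 6⁻¹)
    (fun x y => (hρ.1 x).re_trace_mul_octaPOVM_nonneg y) (fun _ => by norm_num) ?_).trans ?_
  · simp [sum_re_trace_mul_of_sum_eq_one _ sum_octaPOVM, hsum]
  · simp only [sum_re_trace_mul_of_sum_eq_one _ sum_octaPOVM]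
    calc _ ≤ ∑ x, log 2 / 3 * ((ρ x).trace).re := Finset.sum_le_sum fun x _ =>
          (hρ.1 x).sum_re_trace_mul_octaPOVM_mul_log_le
      _ = log 2 / 3 := by rw [← Finset.mul_sum, hsum, mul_one]

theorem antiOcta_mul_octaPOVM_self (x : Fin 6) : antiOcta x * octaPOVM x = 0 := by
  simp only [antiOcta, octaPOVM, Matrix.smul_mul, Matrix.mul_smul, sub_mul, mul_add, one_mul,
    mul_one, dotPauli_octaVec_mul_self]
  module

theorem trace_antiOcta (x : Fin 6) : (antiOcta x).trace = 6⁻¹ := by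
  rw [antiOcta, Matrix.trace_smul, Matrix.trace_sub, Matrix.trace_one, trace_dotPauli]
  norm_num

theorem isEnsemble_antiOcta : IsEnsemble antiOcta := by
  refine ⟨fun x => ?_, by simp [trace_antiOcta]⟩
  exact ((isHermitian_dotPauli _).posSemidef_one_sub (dotPauli_octaVec_mul_self x)).smul
    (by positivity)

theorem re_trace_antiOcta (x : Fin 6) : ((antiOcta x).trace).re = 6⁻¹ := by
  simp [trace_antiOcta]

theorem blochVec_antiOcta (x : Fin 6) : blochVec (antiOcta x) = fun i => -(octaVec x i / 6) := by
  ext i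
  fin_cases i <;>
    simp [blochVec, antiOcta, dotPauli, pauliX, pauliY, pauliZ, Matrix.trace_fin_two,
      Matrix.mul_apply, Fin.sum_univ_two] <;> ring

theorem re_trace_antiOcta_mul_octaPOVM (x y : Fin 6) :
    ((antiOcta x * octaPOVM y).trace).re = (1 - ∑ i, octaVec y i * octaVec x i) / 36 := by
  rw [re_trace_mul_octaPOVM, re_trace_antiOcta, blochVec_antiOcta]
  simp only [mul_neg, Finset.sum_neg_distrib, ← Finset.sum_div, mul_div_assoc']
  ring

theorem mutualInfo_antiOcta_octaPOVM : mutualInfo antiOcta octaPOVM = log 2 / 3 := by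
  rw [mutualInfo_eq_jointMutualInfo _ sum_octaPOVM]
  simp only [jointMutualInfo, re_trace_antiOcta_mul_octaPOVM]
  -- Every row of the joint distribution is a permutation of `(0, 2, 1, 1, 1, 1) / 36`.
  simp only [octaVec, cons_val', cons_val_fin_one, cons_val_zero, cons_val_one, Matrix.cons_val,
    Fin.sum_univ_six, Fin.sum_univ_three, Fin.isValue, one_mul, zero_mul, add_zero, neg_mul,
    sub_neg_eq_add, zero_add, mul_one, mul_zero, mul_neg, sub_self, zero_div, sub_zero, one_div,
    add_neg_cancel, log_zero]
  norm_num
  ring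

theorem infoPower_octaPOVM : infoPower octaPOVM = log 2 / 3 := by
  refine IsGreatest.csSup_eq ⟨?_, ?_⟩
  · exact ⟨6, antiOcta, isEnsemble_antiOcta, mutualInfo_antiOcta_octaPOVM.symm⟩
  · rintro w ⟨n, ρ, hρ, rfl⟩
    exact mutualInfo_octaPOVM_le hρ

/-- the informational power of the octahedral (complete MUB) POVM equals
`(1/6) ln 4 = (1/3) ln 2`, attained by the anti-octahedral ensemble, which satisfies
`ρ_x π_x = 0`. -/
theorem octa_infoPower :
    infoPower octaPOVM = (1 / 6) * Real.log 4
    ∧ (1 / 6) * Real.log 4 = (1 / 3) * Real.log 2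
    ∧ IsEnsemble antiOcta
    ∧ mutualInfo antiOcta octaPOVM = (1 / 6) * Real.log 4
    ∧ ∀ x, antiOcta x * octaPOVM x = 0 := by
  have hlog4 : (1 / 6) * log 4 = log 2 / 3 := by
    rw [show (4 : ℝ) = 2 ^ 2 by norm_num, log_pow]
    ring
  refine ⟨?_, by rw [hlog4]; ring, isEnsemble_antiOcta, ?_, antiOcta_mul_octaPOVM_self⟩
  · rw [hlog4, infoPower_octaPOVM]
  · rw [hlog4, mutualInfo_antiOcta_octaPOVM]
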